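/- Let $H$ be a $(2,d)$-hypergraph and $U \subseteq V(H)$ with $\rho(U) \leq p$. Let $BE_p(U)$ be the edges of $H[U]$ of size $> pd$, and let $U^0_p = U \setminus \bigcup \{e \setminus \bigcup(BE_p(U) \setminus \{e\}) : e \in BE_p(U)\}$. Then $|U^0_p| \leq 2 p^2 d$. -/

import Mathlib

open Finset

open scoped Classical

variable {α : Type*}

structure FinHypergraph (α : Type*) where
  verts : Finset α
  edges : Finset (Finset α)
  edge_sub : ∀ e ∈ edges, e ⊆ verts

namespace FinHypergraph

/-- `U` is a subedge of `H`: it is contained in some hyperedge. -/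
def IsSubedge (H : FinHypergraph α) (U : Finset α) : Prop := ∃ e ∈ H.edges, U ⊆ e

/-- `H` is a `(2,d)`-hypergraph: any two distinct edges intersect in at most `d` vertices. -/
def Is2dHypergraph (H : FinHypergraph α) (d : ℕ) : Prop :=
  ∀ e ∈ H.edges, ∀ f ∈ H.edges, e ≠ f → (e ∩ f).card ≤ d

/-- The induced subhypergraph `H[U]`. -/
noncomputable def induce (H : FinHypergraph α) (U : Finset α) : FinHypergraph α where
  verts := U
  edges := (H.edges.image (· ∩ U)).filter (· ≠ ∅)
  edge_sub := by
    intro e he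
    simp only [Finset.mem_filter, Finset.mem_image] at he
    obtain ⟨⟨f, hf, rfl⟩, -⟩ := he
    exact Finset.inter_subset_right

/-- The adjacency graph of a hypergraph: two distinct vertices are adjacent
iff they lie in a common edge. -/
def adjGraph (H : FinHypergraph α) : SimpleGraph α where
  Adj v w := v ≠ w ∧ ∃ e ∈ H.edges, v ∈ e ∧ w ∈ e
  symm := ⟨by rintro v w ⟨hne, e, he, hv, hw⟩; exact ⟨hne.symm, e, he, hw, hv⟩⟩
  loopless := ⟨by rintro v ⟨hne, -⟩; exact hne rfl⟩

/-- Adjacency in `H` avoiding the vertex set `S` (i.e. adjacency in `H[V(H) \ S]`). -/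
def avoidGraph (H : FinHypergraph α) (S : Finset α) : SimpleGraph α where
  Adj v w := v ≠ w ∧ v ∉ S ∧ w ∉ S ∧ ∃ e ∈ H.edges, v ∈ e ∧ w ∈ e
  symm := ⟨by rintro v w ⟨hne, hv, hw, e, he, h1, h2⟩; exact ⟨hne.symm, hw, hv, e, he, h2, h1⟩⟩
  loopless := ⟨by rintro v ⟨hne, -⟩; exact hne rfl⟩

/-- `S` is an `(A,B)`-separator of `H`: no path of `H[V(H) \ S]` joins
a vertex of `A \ S` to a vertex of `B \ S`. -/
def IsSeparator (H : FinHypergraph α) (A B S : Finset α) : Prop :=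
  ∀ a ∈ A, a ∉ S → ∀ b ∈ B, b ∉ S → ¬ (H.avoidGraph S).Reachable a b

/-- `U` has an edge cover of weight at most `k` (edge cover number `ρ(U) ≤ k`). -/
def CoverLE (H : FinHypergraph α) (U : Finset α) (k : ℕ) : Prop :=
  ∃ F : Finset (Finset α), F ⊆ H.edges ∧ U ⊆ F.biUnion id ∧ F.card ≤ k

/-- `(T, B)` is a tree decomposition of `H`. -/
def IsTreeDecomp (H : FinHypergraph α) {ι : Type*} (T : SimpleGraph ι) (B : ι → Finset α) : Prop :=
  T.IsTree ∧ (∀ u, B u ⊆ H.verts) ∧ (∀ e ∈ H.edges, ∃ u, e ⊆ B u) ∧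
  (∀ v ∈ H.verts, (T.induce {u | v ∈ B u}).Connected)

/-- Generalised hypertree width of `H` is at most `k`. -/
def ghwLE (H : FinHypergraph α) (k : ℕ) : Prop :=
  ∃ (ι : Type) (T : SimpleGraph ι) (B : ι → Finset α),
    H.IsTreeDecomp T B ∧ ∀ u, H.CoverLE (B u) k

/-- Two subedges are incompatible if their union is not a subedge. -/
def Incompatible (H : FinHypergraph α) (X Y : Finset α) : Prop := ¬ H.IsSubedge (X ∪ Y)

/-- `U₁,…,U_a, S₁,…,S_b` form an `(a,b)` subedge hypergrid (shyg). -/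
def IsShyg (H : FinHypergraph α) {a b : ℕ} (U : Fin a → Finset α) (S : Fin b → Finset α) : Prop :=
  (∀ i, H.IsSubedge (U i)) ∧ (∀ j, H.IsSubedge (S j)) ∧
  (∀ i i', i ≠ i' → H.Incompatible (U i) (U i')) ∧
  (∀ j j', j ≠ j' → H.Incompatible (S j) (S j')) ∧
  (∀ i j, H.Incompatible (U i) (S j)) ∧
  (∀ i i', i ≠ i' → Disjoint (U i) (U i')) ∧
  (∀ j i, (S j ∩ U i).Nonempty)

/-- A strong shyg: additionally the `S j` intersect pairwise disjointly inside `⋃ U i`. -/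
def IsStrongShyg (H : FinHypergraph α) {a b : ℕ}
    (U : Fin a → Finset α) (S : Fin b → Finset α) : Prop :=
  H.IsShyg U S ∧ ∀ j j', j ≠ j' → S j ∩ S j' ∩ Finset.univ.biUnion U = ∅

/-- `H` has a strong `(a,b)`-shyg. -/
def HasStrongShyg (H : FinHypergraph α) (a b : ℕ) : Prop :=
  ∃ (U : Fin a → Finset α) (S : Fin b → Finset α), H.IsStrongShyg U S

/-- `ext(C, E')`: the edges of `E'` meeting `C`. -/
noncomputable def ext (E' : Finset (Finset α)) (C : Finset α) : Finset (Finset α) :=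
  E'.filter fun e => (e ∩ C).Nonempty

/-- `C` is (the vertex set of) a connected component of `H`. -/
def IsConnComp (H : FinHypergraph α) (C : Finset α) : Prop :=
  ∃ v ∈ H.verts, ∀ w, w ∈ C ↔ w ∈ H.verts ∧ H.adjGraph.Reachable v w

end FinHypergraph

/-- The vertex set of `T_{x,Y}`: the union of all paths of `G` starting at `x`
whose second vertex belongs to `Y`. -/
def subtreeVerts {V : Type*} (G : SimpleGraph V) (x : V) (Y : Set V) : Set V :=
  {v | v = x ∨ ∃ w : G.Walk x v, w.IsPath ∧ w.getVert 1 ∈ Y ∧ ¬ w.Nil}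

/-- The tree `T⁺_{t,Y}`: the restriction of `T` to `s` together with a fresh node `none`
made adjacent to `t`. -/
def plusGraph {ι : Type*} (T : SimpleGraph ι) (s : Set ι) (t : ι) :
    SimpleGraph (Option s) where
  Adj a b :=
    (∃ u v : s, a = some u ∧ b = some v ∧ T.Adj u v) ∨
    (a = none ∧ ∃ v : s, b = some v ∧ (v : ι) = t) ∨
    (b = none ∧ ∃ u : s, a = some u ∧ (u : ι) = t)
  symm := ⟨by
    rintro a b (⟨u, v, rfl, rfl, h⟩ | ⟨rfl, v, rfl, hv⟩ | ⟨rfl, u, rfl, hu⟩)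
    · exact Or.inl ⟨v, u, rfl, rfl, h.symm⟩
    · exact Or.inr (Or.inr ⟨rfl, v, rfl, hv⟩)
    · exact Or.inr (Or.inl ⟨rfl, u, rfl, hu⟩)⟩
  loopless := ⟨by
    rintro a (⟨u, v, rfl, h1, h2⟩ | ⟨rfl, v, h, -⟩ | ⟨rfl, u, h, -⟩)
    · obtain rfl : u = v := Option.some_injective _ h1
      exact T.loopless.irrefl _ h2
    · exact absurd h (by simp)
    · exact absurd h (by simp)⟩

/-- `ξ'(n,k,d)` from the paper. -/
def xi' (k d : ℕ) : ℕ → ℕ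
  | 0 => (3*k+1)*d+1
  | n+1 => ((3*k+1)*d)^2 * xi' k d n + 1
/-- The `p`-big edges of `H[U]`: edges of size greater than `p·d`. -/
noncomputable def bigEdges {α : Type*} (H : FinHypergraph α) (U : Finset α) (p d : ℕ) :
    Finset (Finset α) :=
  (H.induce U).edges.filter fun e => p * d < e.card

theorem uncovered_part_small {α : Type*} (H : FinHypergraph α) (d p : ℕ)
    (h2d : H.Is2dHypergraph d) (U : Finset α) (hU : U ⊆ H.verts)
    (hrho : (H.induce U).CoverLE U p) :
    (U \ (bigEdges H U p d).biUnion
        (fun e => e \ ((bigEdges H U p d).erase e).biUnion id)).card ≤ 2 * p ^ 2 * d := by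
  classical
  obtain ⟨F, hFE, hUF, hFc⟩ := hrho
  set BE := bigEdges H U p d with hBEdef
  have hBEedges : ∀ e ∈ BE, e ∈ (H.induce U).edges := fun e he => (mem_filter.mp he).1
  -- pairwise intersection bound for induced edges
  have hint : ∀ g ∈ (H.induce U).edges, ∀ g' ∈ (H.induce U).edges, g ≠ g' →
      (g ∩ g').card ≤ d := by
    intro g hg g' hg' hne
    simp only [FinHypergraph.induce, Finset.mem_filter, Finset.mem_image] at hg hg'
    obtain ⟨⟨e, he, rfl⟩, -⟩ := hg
    obtain ⟨⟨f, hf, rfl⟩, -⟩ := hg'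
    have hef : e ≠ f := by rintro rfl; exact hne rfl
    calc (e ∩ U ∩ (f ∩ U)).card ≤ (e ∩ f).card := by
          apply card_le_card; intro x hx; simp only [mem_inter] at hx ⊢; tauto
      _ ≤ d := h2d e he f hf hef
  have hBEsub : BE ⊆ F := by
    intro g hg
    rw [hBEdef, bigEdges, mem_filter] at hg
    obtain ⟨hgE, hgc⟩ := hg
    by_contra hgF
    have hsub : g ⊆ F.biUnion (fun f => g ∩ f) := by
      intro v hv
      have hvU : v ∈ U := (H.induce U).edge_sub g hgE hv
      have := hUF hvU
      simp only [mem_biUnion, id] at this ⊢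
      obtain ⟨f, hf, hvf⟩ := this
      exact ⟨f, hf, mem_inter.mpr ⟨hv, hvf⟩⟩
    have : g.card ≤ p * d := by
      calc g.card ≤ (F.biUnion (fun f => g ∩ f)).card := card_le_card hsub
        _ ≤ ∑ f ∈ F, (g ∩ f).card := card_biUnion_le
        _ ≤ ∑ f ∈ F, d := Finset.sum_le_sum (fun f hf => hint g hgE f (hFE hf)
              (by rintro rfl; exact hgF hf))
        _ = F.card * d := by rw [Finset.sum_const, smul_eq_mul]
        _ ≤ p * d := Nat.mul_le_mul_right d hFc
    omega
  have hBEc : BE.card ≤ p := (card_le_card hBEsub).trans hFc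
  set A := BE.biUnion (fun e => (BE.erase e).biUnion (fun f => e ∩ f)) with hAdef
  set B := (F \ BE).biUnion id with hBdef
  have hWsub : U \ BE.biUnion (fun e => e \ (BE.erase e).biUnion id) ⊆ A ∪ B := by
    intro v hv
    rw [mem_sdiff] at hv
    obtain ⟨hvU, hvN⟩ := hv
    by_cases hbig : ∃ e ∈ BE, v ∈ e
    · obtain ⟨e, heBE, hve⟩ := hbig
      by_cases h2 : ∃ f ∈ BE.erase e, v ∈ f
      · obtain ⟨f, hf, hvf⟩ := h2
        exact mem_union_left _ (mem_biUnion.mpr ⟨e, heBE,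
          mem_biUnion.mpr ⟨f, hf, mem_inter.mpr ⟨hve, hvf⟩⟩⟩)
      · exfalso; apply hvN
        push_neg at h2
        exact mem_biUnion.mpr ⟨e, heBE, mem_sdiff.mpr ⟨hve, fun hmem => by
          obtain ⟨f, hf, hvf⟩ := mem_biUnion.mp hmem
          exact h2 f hf hvf⟩⟩
    · push_neg at hbig
      have := hUF hvU
      simp only [mem_biUnion, id] at this
      obtain ⟨f, hfF, hvf⟩ := this
      exact mem_union_right _ (mem_biUnion.mpr
        ⟨f, mem_sdiff.mpr ⟨hfF, fun hfBE => hbig f hfBE hvf⟩, hvf⟩)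
  have hA : A.card ≤ p * (p * d) := by
    calc A.card ≤ ∑ e ∈ BE, ((BE.erase e).biUnion (fun f => e ∩ f)).card :=
          card_biUnion_le
      _ ≤ ∑ e ∈ BE, (p * d) := by
          refine Finset.sum_le_sum (fun e he => ?_)
          calc ((BE.erase e).biUnion (fun f => e ∩ f)).card
              ≤ ∑ f ∈ BE.erase e, (e ∩ f).card := card_biUnion_le
            _ ≤ ∑ f ∈ BE.erase e, d := Finset.sum_le_sum (fun f hf =>
                hint e (hBEedges e he) f (hBEedges f (mem_of_mem_erase hf))
                  (Ne.symm (ne_of_mem_erase hf)))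
            _ = (BE.erase e).card * d := by rw [Finset.sum_const, smul_eq_mul]
            _ ≤ p * d := Nat.mul_le_mul_right d
                ((card_le_card (erase_subset _ _)).trans hBEc)
      _ = BE.card * (p * d) := by rw [Finset.sum_const, smul_eq_mul]
      _ ≤ p * (p * d) := Nat.mul_le_mul_right _ hBEc
  have hB : B.card ≤ p * (p * d) := by
    calc B.card ≤ ∑ f ∈ F \ BE, (id f).card := card_biUnion_le
      _ ≤ ∑ f ∈ F \ BE, (p * d) := by
          refine Finset.sum_le_sum (fun f hf => ?_)
          rw [mem_sdiff] at hf
          obtain ⟨hfF, hfBE⟩ := hf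
          have hfE : f ∈ (H.induce U).edges := hFE hfF
          by_contra hc
          simp only [id_eq] at hc
          push_neg at hc
          exact hfBE (mem_filter.mpr ⟨hfE, hc⟩)
      _ = (F \ BE).card * (p * d) := by rw [Finset.sum_const, smul_eq_mul]
      _ ≤ p * (p * d) := Nat.mul_le_mul_right _
            ((card_le_card (sdiff_subset)).trans hFc)
  calc (U \ BE.biUnion (fun e => e \ (BE.erase e).biUnion id)).card
      ≤ (A ∪ B).card := card_le_card hWsub
    _ ≤ A.card + B.card := card_union_le _ _
    _ ≤ p * (p * d) + p * (p * d) := Nat.add_le_add hA hB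
    _ = 2 * p ^ 2 * d := by ring
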